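/- arXiv:2109.00371 — 4 statements merged into one kernel-verified Lean document; each statement's English description precedes it below -/
import Mathlib

section
/- Let F : ℝ → [0,∞) be a continuous function satisfying F(t) ≤ F(s) − 2λ' ∫_s^t F(σ)^{r/2} dσ for all s ≤ t, where λ' > 0 and r > 2. Then for all t ≥ s, F(t) ≤ min( F(s), (λ'(r−2)(t−s))^{−2/(r−2)} ). -/
/-!
`F` is nonincreasing, and comparing `F(z) - F(x)` with the integral over `[x, z]` shows that
its lower right Dini derivative is at most `-k F^p` (here `k = 2λ'`, `p = r/2`). The ODE
`y' = -k y^p` has the explicit solutions `y(τ) = ((p-1) k (τ - s) + y(s)^{-(p-1)})^{-1/(p-1)}`;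
running the comparison theorem for Dini derivatives against such a solution with a slightly
smaller rate `c < (p-1) k` (to get the strict inequality at touching points), then letting
`c → (p-1) k` and dropping the initial datum gives `F(t) ≤ ((p-1) k (t-s))^{-1/(p-1)}`.
-/

open intervalIntegral Filter Set Topology

def SatisfiesIntegralDecay (F : ℝ → ℝ) (k p : ℝ) : Prop :=
  ∀ s t : ℝ, s ≤ t → F t ≤ F s - k * ∫ σ in s..t, F σ ^ p

namespace SatisfiesIntegralDecay

variable {F : ℝ → ℝ} {k p : ℝ}

theorem antitone (hF : SatisfiesIntegralDecay F k p) (hFnn : ∀ t, 0 ≤ F t) (hk : 0 ≤ k) :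
    Antitone F := fun s t hst => by
  have hint : 0 ≤ ∫ σ in s..t, F σ ^ p :=
    intervalIntegral.integral_nonneg hst fun σ _ => Real.rpow_nonneg (hFnn σ) p
  nlinarith [hF s t hst]

theorem slope_le (hF : SatisfiesIntegralDecay F k p) (hFc : Continuous F)
    (hFnn : ∀ t, 0 ≤ F t) (hk : 0 ≤ k) (hp : 0 ≤ p) {x z : ℝ} (hxz : x < z) :
    slope F x z ≤ -k * F z ^ p := by
  have hint : ∫ _ in x..z, F z ^ p ≤ ∫ σ in x..z, F σ ^ p :=
    integral_mono_on hxz.le intervalIntegrable_const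
      ((hFc.rpow_const fun _ => Or.inr hp).intervalIntegrable x z)
      fun σ hσ => Real.rpow_le_rpow (hFnn z) (hF.antitone hFnn hk hσ.2) hp
  rw [integral_const, smul_eq_mul] at hint
  rw [slope_def_field, div_le_iff₀ (sub_pos.2 hxz)]
  nlinarith [hF x z hxz.le, mul_le_mul_of_nonneg_left hint hk]

theorem frequently_slope_lt (hF : SatisfiesIntegralDecay F k p) (hFc : Continuous F)
    (hFnn : ∀ t, 0 ≤ F t) (hk : 0 ≤ k) (hp : 0 ≤ p) {x r : ℝ} (hr : -k * F x ^ p < r) :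
    ∃ᶠ z in 𝓝[>] x, slope F x z < r := by
  have hcont : Tendsto (fun z => -k * F z ^ p) (𝓝[>] x) (𝓝 (-k * F x ^ p)) :=
    (((hFc.rpow_const fun _ => Or.inr hp).tendsto x).const_mul _).mono_left nhdsWithin_le_nhds
  refine Eventually.frequently ?_
  filter_upwards [hcont.eventually_lt_const hr, self_mem_nhdsWithin] with z hz hxz
  exact (hF.slope_le hFc hFnn hk hp hxz).trans_lt hz

theorem le_rpow_add (hF : SatisfiesIntegralDecay F k p) (hFc : Continuous F)
    (hFnn : ∀ t, 0 ≤ F t) (hk : 0 ≤ k) (hp : 1 < p) {c s t : ℝ} (hc₀ : 0 ≤ c)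
    (hc : c < (p - 1) * k) (hFs : 0 < F s) (hst : s ≤ t) :
    F t ≤ (c * (t - s) + F s ^ (-(p - 1))) ^ (-(p - 1)⁻¹) := by
  set m := (p - 1)⁻¹
  set g : ℝ → ℝ := fun τ => c * (τ - s) + F s ^ (-(p - 1))
  have hg : ∀ τ, s ≤ τ → 0 < g τ := fun τ hτ => by
    have := mul_nonneg hc₀ (sub_nonneg.2 hτ)
    have := Real.rpow_pos_of_pos hFs (-(p - 1))
    simp only [g]
    linarith
  have hBs : F s ≤ g s ^ (-m) := by
    simp only [g, sub_self, mul_zero, zero_add, ← Real.rpow_mul hFs.le]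
    rw [neg_mul_neg, mul_inv_cancel₀ (sub_pos.2 hp).ne', Real.rpow_one]
  refine image_le_of_liminf_slope_right_lt_deriv_boundary' (f' := fun x => -k * F x ^ p)
    (B' := fun τ => c * (-m) * g τ ^ (-m - 1)) hFc.continuousOn
    (fun x _ r hr => hF.frequently_slope_lt hFc hFnn hk (by linarith) hr) hBs
    ((by fun_prop : Continuous g).continuousOn.rpow_const fun τ hτ => Or.inl (hg τ hτ.1).ne')
    (fun x hx => ?_) (fun x hx hFB => ?_) ⟨hst, le_rfl⟩
  · have hgd : HasDerivAt g c x := by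
      simpa only [mul_one] using
        (((hasDerivAt_id' x).sub_const s).const_mul c).add_const (F s ^ (-(p - 1)))
    exact (hgd.rpow_const (Or.inl (hg x hx.1).ne')).hasDerivWithinAt
  · have hmp : m * (p - 1) = 1 := inv_mul_cancel₀ (sub_pos.2 hp).ne'
    have hpow : F x ^ p = g x ^ (-m - 1) := by
      rw [hFB, ← Real.rpow_mul (hg x hx.1).le]
      congr 1
      linear_combination -hmp
    have hcm : c * m < k := (mul_inv_lt_iff₀ (sub_pos.2 hp)).2 (by linarith)
    have hFx : 0 < F x ^ p := Real.rpow_pos_of_pos (hFB ▸ Real.rpow_pos_of_pos (hg x hx.1) _) _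
    rw [← hpow]
    nlinarith

theorem le_rpow (hF : SatisfiesIntegralDecay F k p) (hFc : Continuous F)
    (hFnn : ∀ t, 0 ≤ F t) (hk : 0 < k) (hp : 1 < p) {s t : ℝ} (hst : s < t) :
    F t ≤ ((p - 1) * k * (t - s)) ^ (-(p - 1)⁻¹) := by
  have hC : 0 < (p - 1) * k := mul_pos (sub_pos.2 hp) hk
  rcases (hFnn s).eq_or_lt with hFs | hFs
  · rw [le_antisymm (hFs ▸ hF.antitone hFnn hk.le hst.le) (hFnn t)]
    exact Real.rpow_nonneg (by nlinarith) _
  have hlim : Tendsto (fun c => (c * (t - s)) ^ (-(p - 1)⁻¹)) (𝓝[<] ((p - 1) * k))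
      (𝓝 (((p - 1) * k * (t - s)) ^ (-(p - 1)⁻¹))) :=
    ((continuousAt_id.mul_const _).rpow_const
      (Or.inl (mul_pos hC (sub_pos.2 hst)).ne')).continuousWithinAt
  refine ge_of_tendsto hlim ?_
  filter_upwards [Ioo_mem_nhdsLT hC] with c hc
  calc F t ≤ (c * (t - s) + F s ^ (-(p - 1))) ^ (-(p - 1)⁻¹) :=
        hF.le_rpow_add hFc hFnn hk.le hp hc.1.le hc.2 hFs hst.le
    _ ≤ (c * (t - s)) ^ (-(p - 1)⁻¹) :=
        Real.rpow_le_rpow_of_nonpos (mul_pos hc.1 (sub_pos.2 hst))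
          (le_add_of_nonneg_right (Real.rpow_nonneg hFs.le _))
          (neg_nonpos.2 (inv_nonneg.2 (sub_nonneg.2 hp.le)))

end SatisfiesIntegralDecay

/-- Comparison-theorem estimate: if `F` is continuous, nonnegative, and satisfies
`F(t) ≤ F(s) − 2λ' ∫_s^t F(σ)^{r/2} dσ` for all `s ≤ t` (with `λ' > 0`, `r > 2`),
then `F(t) ≤ min(F(s), (λ'(r−2)(t−s))^{−2/(r−2)})` for `t ≥ s` (the second bound
being interpreted for `t > s`). -/
theorem polynomial_decay_comparison (F : ℝ → ℝ) (hFc : Continuous F)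
    (hFnn : ∀ t, 0 ≤ F t) (lam' r : ℝ) (hlam' : 0 < lam') (hr : 2 < r)
    (hF : ∀ s t : ℝ, s ≤ t → F t ≤ F s - 2 * lam' * ∫ σ in s..t, (F σ) ^ (r / 2)) :
    ∀ s t : ℝ, s ≤ t →
      F t ≤ F s ∧ (s < t → F t ≤ (lam' * (r - 2) * (t - s)) ^ (-(2 / (r - 2)))) := by
  have hdecay : SatisfiesIntegralDecay F (2 * lam') (r / 2) := hF
  intro s t hst
  refine ⟨hdecay.antitone hFnn (by positivity) hst, fun hlt => ?_⟩
  have hrate : (r / 2 - 1) * (2 * lam') = lam' * (r - 2) := by ring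
  have hexp : (r / 2 - 1)⁻¹ = 2 / (r - 2) := by field_simp
  simpa only [hrate, hexp] using
    hdecay.le_rpow hFc hFnn (by positivity) (by linarith) hlt
end

section
/- Let F : ℝ × H → H satisfy (1/T)‖∫_t^{t+T}(F(s,x)−F̄(x))ds‖ ≤ ω₁(T)(1+‖x‖) for all T>0, t ∈ ℝ, x ∈ H, where ω₁ ∈ Ψ. Suppose F̃ is a pointwise limit of translates: F̃(t,x) = lim_n F(t+tₙ,x) with convergence uniform on sets {|t| ≤ l, ‖x‖ ≤ r}. Then F̃ satisfies the same averaging bound: (1/T)‖∫_t^{t+T}(F̃(s,x)−F̄(x))ds‖ ≤ ω₁(T)(1+‖x‖) for all T>0, t, x; in particular (1/T)∫_t^{t+T} F̃(s,x)ds → F̄(x) uniformly in t. -/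
open Filter Topology intervalIntegral

variable {H : Type*} [NormedAddCommGroup H] [InnerProductSpace ℝ H] [CompleteSpace H]

/-- Every function `F̃` in the hull of `F` (pointwise limit of translates, uniformly
on sets `{|t| ≤ l, ‖x‖ ≤ r}`) satisfies the same averaging bound as `F`, with the
same modulus `ω₁` and the same average `F̄`. -/
theorem hull_function_has_same_average
    (F Ftil : ℝ → H → H) (Fbar : H → H)
    (hFc : ∀ x, Continuous fun t => F t x)
    (hFtilc : ∀ x, Continuous fun t => Ftil t x)
    (hFbarc : Continuous Fbar)
    (ω₁ : ℝ → ℝ) (hω₁pos : ∀ T > 0, 0 < ω₁ T)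
    (hω₁anti : ∀ T₁ T₂ : ℝ, 0 < T₁ → T₁ ≤ T₂ → ω₁ T₂ ≤ ω₁ T₁)
    (hω₁bdd : ∃ M : ℝ, ∀ T > 0, ω₁ T ≤ M)
    (hω₁lim : Tendsto ω₁ atTop (𝓝 0))
    (havg : ∀ T > 0, ∀ (t : ℝ) (x : H),
      (1 / T) * ‖∫ s in t..(t + T), (F s x - Fbar x)‖ ≤ ω₁ T * (1 + ‖x‖))
    (tn : ℕ → ℝ)
    (hconv : ∀ l > 0, ∀ r > 0, ∀ ε > 0, ∃ N : ℕ, ∀ n ≥ N, ∀ (t : ℝ) (x : H),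
      |t| ≤ l → ‖x‖ ≤ r → ‖F (t + tn n) x - Ftil t x‖ ≤ ε) :
    ∀ T > 0, ∀ (t : ℝ) (x : H),
      (1 / T) * ‖∫ s in t..(t + T), (Ftil s x - Fbar x)‖ ≤ ω₁ T * (1 + ‖x‖) := by
  intro T hT t x
  rw [one_div, inv_mul_le_iff₀ hT]
  refine le_of_forall_pos_le_add fun ε hε => ?_
  obtain ⟨N, hN⟩ := hconv (|t| + T + 1) (by positivity) (‖x‖ + 1) (by positivity)
    (ε / T) (by positivity)
  set c := tn N with hc
  have hInt1 : IntervalIntegrable (fun s => Ftil s x - F (s + c) x) MeasureTheory.volume t (t + T) :=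
    ((hFtilc x).sub ((hFc x).comp (continuous_add_right c))).intervalIntegrable _ _
  have hInt2 : IntervalIntegrable (fun s => F (s + c) x - Fbar x) MeasureTheory.volume t (t + T) :=
    (((hFc x).comp (continuous_add_right c)).sub continuous_const).intervalIntegrable _ _
  have hsplit : (∫ s in t..(t + T), (Ftil s x - Fbar x)) =
      (∫ s in t..(t + T), (Ftil s x - F (s + c) x)) +
        ∫ s in t..(t + T), (F (s + c) x - Fbar x) := by
    rw [← intervalIntegral.integral_add hInt1 hInt2]
    simp [sub_add_sub_cancel]
  have hb1 : ‖∫ s in t..(t + T), (Ftil s x - F (s + c) x)‖ ≤ ε := by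
    have h := intervalIntegral.norm_integral_le_of_norm_le_const
      (C := ε / T) (f := fun s => Ftil s x - F (s + c) x) (a := t) (b := t + T) ?_
    · have : |t + T - t| = T := by rw [add_sub_cancel_left, abs_of_pos hT]
      rw [this, div_mul_cancel₀ _ (ne_of_gt hT)] at h
      exact h
    · intro s hs
      rw [Set.uIoc_of_le (by linarith)] at hs
      rw [norm_sub_rev]
      refine hN N le_rfl s x ?_ (by linarith [norm_nonneg x])
      have h1 := neg_abs_le t
      have h2 := le_abs_self t
      rw [abs_le]
      constructor <;> [linarith [hs.1]; linarith [hs.2]]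
  have hb2 : ‖∫ s in t..(t + T), (F (s + c) x - Fbar x)‖ ≤ T * (ω₁ T * (1 + ‖x‖)) := by
    have hshift : (∫ s in t..(t + T), (F (s + c) x - Fbar x)) =
        ∫ s in (t + c)..(t + c + T), (F s x - Fbar x) := by
      have := intervalIntegral.integral_comp_add_right (a := t) (b := t + T)
        (f := fun u => F u x - Fbar x) c
      rw [this]
      congr 1
      ring
    rw [hshift]
    have h := havg T hT (t + c) x
    rw [one_div, inv_mul_le_iff₀ hT] at h
    exact h
  calc ‖∫ s in t..(t + T), (Ftil s x - Fbar x)‖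
      ≤ ‖∫ s in t..(t + T), (Ftil s x - F (s + c) x)‖ +
          ‖∫ s in t..(t + T), (F (s + c) x - Fbar x)‖ := by rw [hsplit]; exact norm_add_le _ _
    _ ≤ ε + T * (ω₁ T * (1 + ‖x‖)) := add_le_add hb1 hb2
    _ = T * (ω₁ T * (1 + ‖x‖)) + ε := by ring
end

section
/- Let {S(t)}_{t≥0} be a semiflow on a complete metric space X possessing a compact attracting set K (i.e. dist(S(t)B, K) → 0 as t → ∞ for every bounded B ⊂ X). Then the ω-limit set ω(K) = ∩_{t≥0} closure(∪_{s≥t} S(s)K) is nonempty, compact, invariant (S(t)ω(K) = ω(K) for all t ≥ 0), and attracts every bounded set; i.e., it is the global attractor of the semiflow. -/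
/-!
Since `K` is compact and attracts bounded sets, every sequence `S(tₙ)xₙ` with `tₙ → ∞` and
`(xₙ)` bounded has a subsequence converging to a point of `K`. Applying this to `S(tₙ - r)xₙ` and
pushing the limit forward by the continuous map `S(r)` shows that the limit even lies in `S(r)K`
for every `r ≥ 0`, hence in `ω(K)`. This asymptotic compactness yields that `ω(K)` is nonempty,
that `ω(K) ⊆ S(t)ω(K)` (write a point of `ω(K)` as a limit of `S(tₙ)xₙ` with `xₙ ∈ K`) and, by
contradiction, that `ω(K)` attracts bounded sets. Continuity of `S(t)` gives `S(t)ω(K) ⊆ ω(K)`,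
and `ω(K)` is compact as a closed subset of `K`.
-/

open Filter Topology Bornology Metric omegaLimit

section OmegaLimit

variable {τ α β : Type*}

theorem biInter_Ici_closure_eq_omegaLimit [Preorder τ] [IsDirectedOrder τ] [TopologicalSpace β]
    (a : τ) (ϕ : τ → α → β) (s : Set α) :
    ⋂ t ∈ Set.Ici a, closure (⋃ r ∈ Set.Ici t, ϕ r '' s) = ω⁺ ϕ s := by
  simp only [Set.iUnion_image_left]
  refine (Set.iInter₂_mono' fun u hu => ?_).antisymm
    (Set.iInter₂_mono' fun t _ => ⟨Set.Ici t, Ici_mem_atTop t, subset_rfl⟩)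
  obtain ⟨t, hat, htu⟩ := (atTop_basis' a).mem_iff.1 hu
  exact ⟨t, hat, closure_mono (Set.image2_subset_right htu)⟩

theorem mem_omegaLimit_of_eventually_mem_image [TopologicalSpace β] {f : Filter τ} [f.NeBot]
    {ϕ : τ → α → β} {s : Set α} {y : β} (hy : ∀ᶠ t in f, y ∈ ϕ t '' s) : y ∈ ω f ϕ s := by
  refine Set.mem_iInter₂.2 fun u hu => subset_closure ?_
  obtain ⟨t, ⟨x, hx, rfl⟩, htu⟩ := (hy.and hu).exists
  exact Set.mem_image2_of_mem htu hx

theorem exists_seq_tendsto_of_mem_omegaLimit [PseudoMetricSpace β] {f : Filter τ}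
    [f.IsCountablyGenerated] {ϕ : τ → α → β} {s : Set α} {y : β} (hy : y ∈ ω f ϕ s) :
    ∃ t : ℕ → τ, Tendsto t atTop f ∧ ∃ x : ℕ → α, (∀ n, x n ∈ s) ∧
      Tendsto (fun n => ϕ (t n) (x n)) atTop (𝓝 y) := by
  obtain ⟨u, hu⟩ := f.exists_antitone_basis
  have hclose : ∀ n : ℕ, ∃ t ∈ u n, ∃ x ∈ s, dist (ϕ t x) y < 1 / (n + 1) := fun n => by
    obtain ⟨_, ⟨t, ht, x, hx, rfl⟩, hdist⟩ := Metric.mem_closure_iff.1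
      (omegaLimit_subset_closure_image2 f ϕ s (hu.mem n) hy) _ Nat.one_div_pos_of_nat
    exact ⟨t, ht, x, hx, dist_comm y _ ▸ hdist⟩
  choose t ht x hx hdist using hclose
  refine ⟨t, hu.tendsto ht, x, hx, tendsto_iff_dist_tendsto_zero.2 ?_⟩
  exact squeeze_zero (fun _ => dist_nonneg) (fun n => (hdist n).le)
    tendsto_one_div_add_atTop_nhds_zero_nat

end OmegaLimit

theorem IsCompact.exists_tendsto_subseq_of_tendsto_infDist {X : Type*} [PseudoMetricSpace X]
    {K : Set X} (hK : IsCompact K) (hne : K.Nonempty) {z : ℕ → X}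
    (hz : Tendsto (fun n => infDist (z n) K) atTop (𝓝 0)) :
    ∃ b ∈ K, ∃ φ : ℕ → ℕ, StrictMono φ ∧ Tendsto (z ∘ φ) atTop (𝓝 b) := by
  choose y hyK hy using fun n => hK.exists_infDist_eq_dist hne (z n)
  obtain ⟨b, hb, φ, hφ, hyb⟩ := hK.tendsto_subseq hyK
  refine ⟨b, hb, φ, hφ, hyb.congr_dist ?_⟩
  simpa only [Function.comp_def, dist_comm (y _), ← hy] using hz.comp hφ.tendsto_atTop

section Semiflow

variable {X : Type*} [MetricSpace X] {S : ℝ → X → X} {K B : Set X}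

def AttractsBounded (S : ℝ → X → X) (A : Set X) : Prop :=
  ∀ B : Set X, IsBounded B → ∀ ε > 0, ∃ T : ℝ, ∀ t ≥ T, ∀ x ∈ B, ∃ y ∈ A, dist (S t x) y ≤ ε

theorem mapsTo_omegaLimit_of_semiflow
    (hSadd : ∀ t s : ℝ, 0 ≤ t → 0 ≤ s → ∀ x, S (t + s) x = S t (S s x))
    {t : ℝ} (ht : 0 ≤ t) (hSt : Continuous (S t)) (s : Set X) :
    Set.MapsTo (S t) (ω⁺ S s) (ω⁺ S s) := by
  refine (mapsTo_omegaLimit' (ϕ' := fun τ => S (t + τ)) s (Set.mapsTo_id s) ?_ hSt).mono_right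
    (omegaLimit_subset_of_tendsto S s (tendsto_atTop_add_const_left _ t tendsto_id))
  filter_upwards [eventually_ge_atTop 0] with τ hτ x _
  exact (hSadd t τ ht hτ x).symm

theorem apply_eq_of_tendsto_sub
    (hSadd : ∀ t s : ℝ, 0 ≤ t → 0 ≤ s → ∀ x, S (t + s) x = S t (S s x))
    {r : ℝ} (hr : 0 ≤ r) (hSr : Continuous (S r)) {t : ℕ → ℝ} (ht : Tendsto t atTop atTop)
    {x : ℕ → X} {a b : X} (ha : Tendsto (fun n => S (t n) (x n)) atTop (𝓝 a))
    (hb : Tendsto (fun n => S (t n - r) (x n)) atTop (𝓝 b)) : S r b = a := by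
  refine tendsto_nhds_unique ((hSr.tendsto b).comp hb) (ha.congr' ?_)
  filter_upwards [ht.eventually_ge_atTop r] with n hn
  rw [Function.comp_apply, ← hSadd r _ hr (sub_nonneg.2 hn), add_sub_cancel]

namespace AttractsBounded

theorem nonempty [Nonempty X] (h : AttractsBounded S K) : K.Nonempty := by
  obtain ⟨T, hT⟩ := h {Classical.arbitrary X} isBounded_singleton 1 one_pos
  obtain ⟨y, hy, -⟩ := hT T le_rfl _ rfl
  exact ⟨y, hy⟩

theorem tendsto_infDist (h : AttractsBounded S K) (hB : IsBounded B) {t : ℕ → ℝ}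
    (ht : Tendsto t atTop atTop) {x : ℕ → X} (hx : ∀ n, x n ∈ B) :
    Tendsto (fun n => infDist (S (t n) (x n)) K) atTop (𝓝 0) := by
  refine tendsto_order.2 ⟨fun ε hε => .of_forall fun n => hε.trans_le infDist_nonneg,
    fun ε hε => ?_⟩
  obtain ⟨T, hT⟩ := h B hB (ε / 2) (half_pos hε)
  filter_upwards [ht.eventually_ge_atTop T] with n hn
  obtain ⟨y, hy, hdist⟩ := hT _ hn _ (hx n)
  exact ((infDist_le_dist_of_mem hy).trans hdist).trans_lt (half_lt_self hε)

theorem exists_tendsto_subseq (h : AttractsBounded S K) (hK : IsCompact K) (hB : IsBounded B)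
    {t : ℕ → ℝ} (ht : Tendsto t atTop atTop) {x : ℕ → X} (hx : ∀ n, x n ∈ B) :
    ∃ b ∈ K, ∃ φ : ℕ → ℕ, StrictMono φ ∧
      Tendsto (fun n => S (t (φ n)) (x (φ n))) atTop (𝓝 b) :=
  haveI : Nonempty X := ⟨x 0⟩
  hK.exists_tendsto_subseq_of_tendsto_infDist h.nonempty (h.tendsto_infDist hB ht hx)

theorem omegaLimit_subset (h : AttractsBounded S K) (hK : IsCompact K) (hB : IsBounded B) :
    ω⁺ S B ⊆ K := by
  intro y hy
  obtain ⟨t, ht, x, hx, hxy⟩ := exists_seq_tendsto_of_mem_omegaLimit hy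
  obtain ⟨b, hb, φ, hφ, hxb⟩ := h.exists_tendsto_subseq hK hB ht hx
  rwa [tendsto_nhds_unique (hxy.comp hφ.tendsto_atTop) hxb]

theorem mem_image_of_tendsto (h : AttractsBounded S K) (hK : IsCompact K)
    (hSadd : ∀ t s : ℝ, 0 ≤ t → 0 ≤ s → ∀ x, S (t + s) x = S t (S s x))
    {r : ℝ} (hr : 0 ≤ r) (hSr : Continuous (S r)) (hB : IsBounded B)
    {t : ℕ → ℝ} (ht : Tendsto t atTop atTop) {x : ℕ → X} (hx : ∀ n, x n ∈ B) {b : X}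
    (hb : Tendsto (fun n => S (t n) (x n)) atTop (𝓝 b)) : b ∈ S r '' K := by
  have htr : Tendsto (fun n => t n - r) atTop atTop := tendsto_atTop_add_const_right _ _ ht
  obtain ⟨w, hw, φ, hφ, hxw⟩ := h.exists_tendsto_subseq hK hB htr hx
  exact ⟨w, hw, apply_eq_of_tendsto_sub hSadd hr hSr (ht.comp hφ.tendsto_atTop)
    (hb.comp hφ.tendsto_atTop) hxw⟩

theorem exists_tendsto_subseq_omegaLimit (h : AttractsBounded S K) (hK : IsCompact K)
    (hSadd : ∀ t s : ℝ, 0 ≤ t → 0 ≤ s → ∀ x, S (t + s) x = S t (S s x))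
    (hSt : ∀ t ≥ (0 : ℝ), Continuous (S t)) (hB : IsBounded B)
    {t : ℕ → ℝ} (ht : Tendsto t atTop atTop) {x : ℕ → X} (hx : ∀ n, x n ∈ B) :
    ∃ b ∈ ω⁺ S K, ∃ φ : ℕ → ℕ, StrictMono φ ∧
      Tendsto (fun n => S (t (φ n)) (x (φ n))) atTop (𝓝 b) := by
  obtain ⟨b, -, φ, hφ, hxb⟩ := h.exists_tendsto_subseq hK hB ht hx
  refine ⟨b, mem_omegaLimit_of_eventually_mem_image ?_, φ, hφ, hxb⟩
  filter_upwards [eventually_ge_atTop 0] with r hr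
  exact h.mem_image_of_tendsto hK hSadd hr (hSt r hr) hB (ht.comp hφ.tendsto_atTop)
    (fun n => hx (φ n)) hxb

theorem nonempty_omegaLimit [Nonempty X] (h : AttractsBounded S K) (hK : IsCompact K)
    (hSadd : ∀ t s : ℝ, 0 ≤ t → 0 ≤ s → ∀ x, S (t + s) x = S t (S s x))
    (hSt : ∀ t ≥ (0 : ℝ), Continuous (S t)) : (ω⁺ S K).Nonempty := by
  obtain ⟨x₀, hx₀⟩ := h.nonempty
  obtain ⟨b, hb, -⟩ := h.exists_tendsto_subseq_omegaLimit hK hSadd hSt hK.isBounded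
    tendsto_natCast_atTop_atTop (x := fun _ => x₀) fun _ => hx₀
  exact ⟨b, hb⟩

theorem isCompact_omegaLimit (h : AttractsBounded S K) (hK : IsCompact K) :
    IsCompact (ω⁺ S K) :=
  hK.of_isClosed_subset (isClosed_omegaLimit _ _ _) (h.omegaLimit_subset hK hK.isBounded)

theorem subset_image_omegaLimit (h : AttractsBounded S K) (hK : IsCompact K)
    (hSadd : ∀ t s : ℝ, 0 ≤ t → 0 ≤ s → ∀ x, S (t + s) x = S t (S s x))
    (hSt : ∀ t ≥ (0 : ℝ), Continuous (S t)) {t : ℝ} (ht : 0 ≤ t) :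
    ω⁺ S K ⊆ S t '' ω⁺ S K := by
  intro a ha
  obtain ⟨s, hs, x, hx, hxa⟩ := exists_seq_tendsto_of_mem_omegaLimit ha
  have hst : Tendsto (fun n => s n - t) atTop atTop := tendsto_atTop_add_const_right _ _ hs
  obtain ⟨b, hb, φ, hφ, hxb⟩ :=
    h.exists_tendsto_subseq_omegaLimit hK hSadd hSt hK.isBounded hst hx
  exact ⟨b, hb, apply_eq_of_tendsto_sub hSadd ht (hSt t ht) (hs.comp hφ.tendsto_atTop)
    (hxa.comp hφ.tendsto_atTop) hxb⟩

theorem attractsBounded_omegaLimit (h : AttractsBounded S K) (hK : IsCompact K)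
    (hSadd : ∀ t s : ℝ, 0 ≤ t → 0 ≤ s → ∀ x, S (t + s) x = S t (S s x))
    (hSt : ∀ t ≥ (0 : ℝ), Continuous (S t)) : AttractsBounded S (ω⁺ S K) := by
  intro B hB ε hε
  by_contra! hfar
  choose t ht x hx hfar using fun n : ℕ => hfar n
  obtain ⟨b, hb, φ, -, hxb⟩ := h.exists_tendsto_subseq_omegaLimit hK hSadd hSt hB
    (tendsto_atTop_mono ht tendsto_natCast_atTop_atTop) hx
  obtain ⟨n, hn⟩ := (hxb.eventually (closedBall_mem_nhds b hε)).exists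
  exact (hfar (φ n) b hb).not_ge (mem_closedBall.1 hn)

end AttractsBounded

end Semiflow

theorem global_attractor_of_compact_attracting_set_general
    {X : Type*} [MetricSpace X] [Nonempty X]
    (S : ℝ → X → X)
    (hSadd : ∀ t s : ℝ, 0 ≤ t → 0 ≤ s → ∀ x, S (t + s) x = S t (S s x))
    (hScont : ContinuousOn (fun p : ℝ × X => S p.1 p.2) (Set.Ici 0 ×ˢ Set.univ))
    (K : Set X) (hK : IsCompact K)
    (hattr : ∀ B : Set X, IsBounded B → ∀ ε > 0, ∃ T : ℝ, ∀ t ≥ T, ∀ x ∈ B,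
      ∃ y ∈ K, dist (S t x) y ≤ ε) :
    ∀ A : Set X, A = ⋂ t ∈ Set.Ici (0 : ℝ), closure (⋃ s ∈ Set.Ici t, S s '' K) →
      A.Nonempty ∧ IsCompact A ∧ (∀ t ≥ (0 : ℝ), S t '' A = A) ∧
        (∀ B : Set X, IsBounded B → ∀ ε > 0, ∃ T : ℝ, ∀ t ≥ T, ∀ x ∈ B,
          ∃ y ∈ A, dist (S t x) y ≤ ε) := by
  rintro A rfl
  have h : AttractsBounded S K := hattr
  have hSt : ∀ t ≥ (0 : ℝ), Continuous (S t) := fun t ht =>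
    hScont.comp_continuous (continuous_const.prodMk continuous_id) fun _ => ⟨ht, trivial⟩
  rw [biInter_Ici_closure_eq_omegaLimit]
  exact ⟨h.nonempty_omegaLimit hK hSadd hSt, h.isCompact_omegaLimit hK,
    fun t ht => (mapsTo_omegaLimit_of_semiflow hSadd ht (hSt t ht) K).image_subset.antisymm
      (h.subset_image_omegaLimit hK hSadd hSt ht),
    h.attractsBounded_omegaLimit hK hSadd hSt⟩

/-- A semiflow on a complete metric space possessing a compact attracting set `K`
has a global attractor, namely the ω-limit set
`ω(K) = ⋂_{t ≥ 0} closure(⋃_{s ≥ t} S(s)K)`: it is nonempty, compact, invariant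
and attracts every bounded set. -/
theorem global_attractor_of_compact_attracting_set
    {X : Type*} [MetricSpace X] [CompleteSpace X] [Nonempty X]
    (S : ℝ → X → X)
    (hS0 : ∀ x, S 0 x = x)
    (hSadd : ∀ t s : ℝ, 0 ≤ t → 0 ≤ s → ∀ x, S (t + s) x = S t (S s x))
    (hScont : ContinuousOn (fun p : ℝ × X => S p.1 p.2) (Set.Ici 0 ×ˢ Set.univ))
    (K : Set X) (hK : IsCompact K)
    (hattr : ∀ B : Set X, IsBounded B → ∀ ε > 0, ∃ T : ℝ, ∀ t ≥ T, ∀ x ∈ B,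
      ∃ y ∈ K, dist (S t x) y ≤ ε) :
    ∀ A : Set X, A = ⋂ t ∈ Set.Ici (0 : ℝ), closure (⋃ s ∈ Set.Ici t, S s '' K) →
      A.Nonempty ∧ IsCompact A ∧ (∀ t ≥ (0 : ℝ), S t '' A = A) ∧
        (∀ B : Set X, IsBounded B → ∀ ε > 0, ∃ T : ℝ, ∀ t ≥ T, ∀ x ∈ B,
          ∃ y ∈ A, dist (S t x) y ≤ ε) :=
  global_attractor_of_compact_attracting_set_general S hSadd hScont K hK hattr
end

section
/- Let (μ(t))_{t∈ℝ} and (ν(t))_{t∈ℝ} be two families of probability measures on a Hilbert space H, each with uniformly bounded second moments, satisfying the flow property μ(t) = P(t,s)μ(s) and ν(t) = P(t,s)ν(s) for all t ≥ s, where P(t,s) is a Markov transition operator with the contraction property d_{BL}(P(t,s)μ, P(t,s)ν) ≤ e^{−c(t−s)} W(μ,ν) for some c > 0 and W(μ,ν) := inf over couplings (X,Y) with laws μ,ν of (E‖X−Y‖²)^{1/2}, and suppose sup_t ∫‖x‖² dμ(t), sup_t ∫‖x‖² dν(t) < ∞. Then μ(t) = ν(t) for all t ∈ ℝ. -/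
open MeasureTheory

variable {H : Type*} [NormedAddCommGroup H] [InnerProductSpace ℝ H] [CompleteSpace H]
  [SecondCountableTopology H] [MeasurableSpace H] [BorelSpace H]

/-- The bounded-Lipschitz distance
`d_{BL}(μ,ν) = sup{|∫φdμ − ∫φdν| : Lip(φ) + ‖φ‖_∞ ≤ 1}`. -/
noncomputable def dBL (μ ν : Measure H) : ℝ :=
  ⨆ φ : {φ : H → ℝ // ∃ K C : ℝ, 0 ≤ K ∧ LipschitzWith (Real.toNNReal K) φ ∧
      (∀ x, |φ x| ≤ C) ∧ K + C ≤ 1},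
    |(∫ x, φ.1 x ∂μ) - ∫ x, φ.1 x ∂ν|

/-- The `L²`-Wasserstein-type coupling distance
`W(μ,ν) = inf{(E‖X−Y‖²)^{1/2} : (X,Y) a coupling of μ, ν}`. -/
noncomputable def W2 (μ ν : Measure H) : ℝ :=
  ⨅ γ : {γ : Measure (H × H) // IsProbabilityMeasure γ ∧
      γ.map Prod.fst = μ ∧ γ.map Prod.snd = ν},
    (∫ q : H × H, ‖q.1 - q.2‖ ^ 2 ∂γ.1) ^ (1 / 2 : ℝ)

/-!
Fix `t` and run both flows from a time `s = t - r`. The contraction bounds `d_BL(μ t, ν t)` by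
`e^{-cr} W(μ s, ν s)`, and the independent coupling bounds `W(μ s, ν s)` uniformly in `s` by the
second moments. Letting `r → ∞` gives `d_BL(μ t, ν t) = 0`; since bounded Lipschitz functions
approximate indicators of closed sets, this forces `μ t = ν t`.
-/

open Filter Topology
open scoped NNReal

theorem MeasureTheory.ext_of_forall_integral_lipschitz_eq {Ω : Type*} [PseudoEMetricSpace Ω]
    [MeasurableSpace Ω] [BorelSpace Ω] {μ ν : Measure Ω} [IsFiniteMeasure μ] [IsFiniteMeasure ν]
    (h : ∀ (φ : Ω → ℝ) (K C : ℝ≥0), LipschitzWith K φ → (∀ x, |φ x| ≤ C) →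
      ∫ x, φ x ∂μ = ∫ x, φ x ∂ν) :
    μ = ν := by
  have hclosed (F : Set Ω) (hF : IsClosed F) : μ F = ν F := by
    have hδ (n : ℕ) : (0 : ℝ) < 1 / (n + 1) := Nat.one_div_pos_of_nat
    have hμ := tendsto_integral_thickenedIndicator_of_isClosed μ hF hδ
      tendsto_one_div_add_atTop_nhds_zero_nat
    have hν := tendsto_integral_thickenedIndicator_of_isClosed ν hF hδ
      tendsto_one_div_add_atTop_nhds_zero_nat
    have heq : (fun n : ℕ => ∫ x, (thickenedIndicator (hδ n) F x : ℝ) ∂μ) =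
        fun n : ℕ => ∫ x, (thickenedIndicator (hδ n) F x : ℝ) ∂ν := funext fun n =>
      h _ _ 1 (NNReal.isometry_coe.lipschitz.comp (lipschitzWith_thickenedIndicator (hδ n) F))
        fun x => by simpa using thickenedIndicator_le_one (hδ n) F x
    rw [heq] at hμ
    exact (measureReal_eq_measureReal_iff).1 (tendsto_nhds_unique hμ hν)
  refine ext_of_generate_finite _ ?_ isPiSystem_isClosed hclosed (hclosed _ isClosed_univ)
  rw [BorelSpace.measurable_eq (α := Ω), borel_eq_generateFrom_isClosed]

theorem bddAbove_range_dBL {Ω : Type*} [PseudoEMetricSpace Ω] [MeasurableSpace Ω]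
    {μ ν : Measure Ω} [IsFiniteMeasure μ] [IsFiniteMeasure ν] :
    BddAbove (Set.range fun φ : {φ : Ω → ℝ // ∃ K C : ℝ, 0 ≤ K ∧
      LipschitzWith (Real.toNNReal K) φ ∧ (∀ x, |φ x| ≤ C) ∧ K + C ≤ 1} =>
      |(∫ x, φ.1 x ∂μ) - ∫ x, φ.1 x ∂ν|) := by
  refine ⟨μ.real Set.univ + ν.real Set.univ, ?_⟩
  rintro r ⟨⟨φ, K, C, hK, -, hC, hKC⟩, rfl⟩
  have hC1 : C ≤ 1 := by linarith
  have hbound (ρ : Measure Ω) [IsFiniteMeasure ρ] : |∫ x, φ x ∂ρ| ≤ ρ.real Set.univ :=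
    calc |∫ x, φ x ∂ρ| = ‖∫ x, φ x ∂ρ‖ := (Real.norm_eq_abs _).symm
      _ ≤ C * ρ.real Set.univ := norm_integral_le_of_norm_le_const (ae_of_all _ hC)
      _ ≤ ρ.real Set.univ := mul_le_of_le_one_left measureReal_nonneg hC1
  exact (abs_sub _ _).trans (add_le_add (hbound μ) (hbound ν))

section BoundedLipschitz

variable {μ ν : Measure H} [IsFiniteMeasure μ] [IsFiniteMeasure ν]

theorem abs_integral_sub_le_dBL {φ : H → ℝ} {K C : ℝ} (hK : 0 ≤ K)
    (hL : LipschitzWith (Real.toNNReal K) φ) (hC : ∀ x, |φ x| ≤ C) (hKC : K + C ≤ 1) :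
    |(∫ x, φ x ∂μ) - ∫ x, φ x ∂ν| ≤ dBL μ ν :=
  le_ciSup (f := fun φ : {φ : H → ℝ // ∃ K C : ℝ, 0 ≤ K ∧
      LipschitzWith (Real.toNNReal K) φ ∧ (∀ x, |φ x| ≤ C) ∧ K + C ≤ 1} =>
      |(∫ x, φ.1 x ∂μ) - ∫ x, φ.1 x ∂ν|) bddAbove_range_dBL ⟨φ, K, C, hK, hL, hC, hKC⟩

theorem integral_eq_of_dBL_nonpos (h : dBL μ ν ≤ 0) {φ : H → ℝ} {K C : ℝ≥0}
    (hL : LipschitzWith K φ) (hC : ∀ x, |φ x| ≤ C) :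
    ∫ x, φ x ∂μ = ∫ x, φ x ∂ν := by
  -- rescale `φ` into the unit ball of the bounded-Lipschitz norm
  set a : ℝ := ((K : ℝ) + C + 1)⁻¹
  have ha : 0 < a := by positivity
  have hLa : LipschitzWith (Real.toNNReal (a * K)) (fun x => a * φ x) := by
    rw [Real.toNNReal_mul ha.le, Real.toNNReal_coe, Real.toNNReal_of_nonneg ha.le,
      ← Real.nnnorm_of_nonneg ha.le]
    exact (lipschitzWith_smul a).comp hL
  have hCa (x : H) : |a * φ x| ≤ a * C := by
    rw [abs_mul, abs_of_pos ha]; exact mul_le_mul_of_nonneg_left (hC x) ha.le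
  have hKCa : a * K + a * C ≤ 1 := by
    rw [← mul_add, inv_mul_le_iff₀ (by positivity)]; linarith
  have := (abs_integral_sub_le_dBL (by positivity) hLa hCa hKCa).trans h
  rw [integral_const_mul, integral_const_mul, ← mul_sub, abs_nonpos_iff,
    mul_eq_zero, sub_eq_zero] at this
  exact this.resolve_left ha.ne'

theorem eq_of_dBL_nonpos (h : dBL μ ν ≤ 0) : μ = ν :=
  ext_of_forall_integral_lipschitz_eq fun _ _ _ hL hC => integral_eq_of_dBL_nonpos h hL hC

end BoundedLipschitz

theorem W2_le_of_coupling {μ ν : Measure H} (γ : Measure (H × H)) [IsProbabilityMeasure γ]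
    (hfst : γ.map Prod.fst = μ) (hsnd : γ.map Prod.snd = ν) :
    W2 μ ν ≤ (∫ q : H × H, ‖q.1 - q.2‖ ^ 2 ∂γ) ^ (1 / 2 : ℝ) := by
  refine ciInf_le (f := fun γ : {γ : Measure (H × H) // IsProbabilityMeasure γ ∧
      γ.map Prod.fst = μ ∧ γ.map Prod.snd = ν} =>
      (∫ q : H × H, ‖q.1 - q.2‖ ^ 2 ∂γ.1) ^ (1 / 2 : ℝ)) ⟨0, ?_⟩ ⟨γ, inferInstance, hfst, hsnd⟩
  rintro r ⟨γ', rfl⟩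
  exact Real.rpow_nonneg (integral_nonneg fun q => by positivity) _

theorem norm_sub_sq_le_two_mul_add {E : Type*} [SeminormedAddCommGroup E] (x y : E) :
    ‖x - y‖ ^ 2 ≤ 2 * ‖x‖ ^ 2 + 2 * ‖y‖ ^ 2 := by
  nlinarith [norm_sub_le x y, norm_nonneg (x - y), sq_nonneg (‖x‖ - ‖y‖)]

theorem W2_le_secondMoments {μ ν : Measure H} [IsProbabilityMeasure μ] [IsProbabilityMeasure ν]
    (hμ : Integrable (fun x : H => ‖x‖ ^ 2) μ) (hν : Integrable (fun x : H => ‖x‖ ^ 2) ν) :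
    W2 μ ν ≤ (2 * ∫ x, ‖x‖ ^ 2 ∂μ + 2 * ∫ x, ‖x‖ ^ 2 ∂ν) ^ (1 / 2 : ℝ) := by
  have h1 : Integrable (fun q : H × H => 2 * ‖q.1‖ ^ 2) (μ.prod ν) := (hμ.comp_fst ν).const_mul 2
  have h2 : Integrable (fun q : H × H => 2 * ‖q.2‖ ^ 2) (μ.prod ν) := (hν.comp_snd μ).const_mul 2
  have hint : Integrable (fun q : H × H => ‖q.1 - q.2‖ ^ 2) (μ.prod ν) :=
    (h1.add h2).mono' (by fun_prop) (ae_of_all _ fun q => by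
      rw [Real.norm_of_nonneg (by positivity)]; exact norm_sub_sq_le_two_mul_add q.1 q.2)
  have hmoments : ∫ q : H × H, 2 * ‖q.1‖ ^ 2 + 2 * ‖q.2‖ ^ 2 ∂(μ.prod ν) =
      2 * ∫ x, ‖x‖ ^ 2 ∂μ + 2 * ∫ x, ‖x‖ ^ 2 ∂ν := by
    rw [integral_add h1 h2, integral_fun_fst (fun x : H => 2 * ‖x‖ ^ 2),
      integral_fun_snd (fun x : H => 2 * ‖x‖ ^ 2), integral_const_mul, integral_const_mul]
    simp
  refine (W2_le_of_coupling (μ.prod ν) (by simp) (by simp)).trans ?_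
  refine Real.rpow_le_rpow (integral_nonneg fun q => by positivity) ?_ (by norm_num)
  exact hmoments ▸ integral_mono hint (h1.add h2) fun q => norm_sub_sq_le_two_mul_add q.1 q.2

theorem nonpos_of_forall_le_exp_neg_mul {c d B : ℝ} (hc : 0 < c)
    (h : ∀ r, 0 ≤ r → d ≤ Real.exp (-c * r) * B) : d ≤ 0 := by
  have hlim : Tendsto (fun r => Real.exp (-c * r) * B) atTop (𝓝 0) := by
    simpa [neg_mul] using
      (Real.tendsto_exp_neg_atTop_nhds_zero.comp (tendsto_id.const_mul_atTop hc)).mul_const B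
  exact ge_of_tendsto hlim ((eventually_ge_atTop 0).mono h)

/-- Uniqueness of the `L²`-bounded flow of measures: if two measure-flows with
uniformly bounded second moments satisfy the same Markov flow property, and the
transition operator contracts `d_{BL}` against `W` at exponential rate `c > 0`,
then the two flows coincide. -/
theorem measure_flow_unique
    (μ ν : ℝ → Measure H)
    (hμp : ∀ t, IsProbabilityMeasure (μ t)) (hνp : ∀ t, IsProbabilityMeasure (ν t))
    (P : ℝ → ℝ → Measure H → Measure H)
    (hflowμ : ∀ s t : ℝ, s ≤ t → μ t = P t s (μ s))
    (hflowν : ∀ s t : ℝ, s ≤ t → ν t = P t s (ν s))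
    (c : ℝ) (hc : 0 < c)
    (hcontr : ∀ s t : ℝ, s ≤ t → ∀ μ' ν' : Measure H,
      IsProbabilityMeasure μ' → IsProbabilityMeasure ν' →
      dBL (P t s μ') (P t s ν') ≤ Real.exp (-c * (t - s)) * W2 μ' ν')
    (M : ℝ)
    (hμint : ∀ t, Integrable (fun x : H => ‖x‖ ^ 2) (μ t))
    (hνint : ∀ t, Integrable (fun x : H => ‖x‖ ^ 2) (ν t))
    (hμM : ∀ t, (∫ x, ‖x‖ ^ 2 ∂μ t) ≤ M) (hνM : ∀ t, (∫ x, ‖x‖ ^ 2 ∂ν t) ≤ M) :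
    ∀ t : ℝ, μ t = ν t := by
  intro t
  have := hμp t
  have := hνp t
  have hW (s : ℝ) : W2 (μ s) (ν s) ≤ (2 * M + 2 * M) ^ (1 / 2 : ℝ) :=
    (W2_le_secondMoments (hμint s) (hνint s)).trans <|
      Real.rpow_le_rpow (by positivity) (by linarith [hμM s, hνM s]) (by norm_num)
  refine eq_of_dBL_nonpos <|
    nonpos_of_forall_le_exp_neg_mul (B := (2 * M + 2 * M) ^ (1 / 2 : ℝ)) hc fun r hr => ?_
  have hst : t - r ≤ t := by linarith
  calc dBL (μ t) (ν t)
      = dBL (P t (t - r) (μ (t - r))) (P t (t - r) (ν (t - r))) := by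
        rw [← hflowμ _ _ hst, ← hflowν _ _ hst]
    _ ≤ Real.exp (-c * r) * W2 (μ (t - r)) (ν (t - r)) := by
        simpa only [sub_sub_cancel] using hcontr _ _ hst _ _ (hμp _) (hνp _)
    _ ≤ Real.exp (-c * r) * (2 * M + 2 * M) ^ (1 / 2 : ℝ) :=
        mul_le_mul_of_nonneg_left (hW _) (Real.exp_pos _).le
end
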